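/- For all integers n > k ≥ 1, msum(n,k) > 0. Moreover, if k is odd and n is even then 2·msum(n,k) is an odd positive integer (so msum(n,k) ≥ 1/2), and otherwise msum(n,k) is a positive integer (so msum(n,k) ≥ 1). -/
import Mathlib


/-- The cyclic `k`-consecutive sum of the permutation `π` of `{1,…,n}`
(realized as `Equiv.Perm (Fin n)` with values `π i + 1 ∈ {1,…,n}`) starting at position `i`. -/
def ksum (n k : ℕ) (π : Equiv.Perm (Fin n)) (i : ℕ) : ℕ :=
  ∑ j ∈ Finset.range k,
    if h : (i + j) % n < n then ((π ⟨(i + j) % n, h⟩ : ℕ) + 1) else 0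

/-- The maximal cyclic `k`-consecutive sum of `π`. -/
def maxksum (n k : ℕ) (π : Equiv.Perm (Fin n)) : ℕ :=
  Finset.sup (Finset.range n) (ksum n k π)

/-- `msum n k` : minimum over permutations of `max_i s_i - k(n+1)/2`. -/
noncomputable def msum (n k : ℕ) : ℚ :=
  Finset.inf' (Finset.univ : Finset (Equiv.Perm (Fin n))) ⟨1, Finset.mem_univ 1⟩
    (fun π => (maxksum n k π : ℚ) - (k : ℚ) * ((n : ℚ) + 1) / 2)

/-- `disc n k` : minimum over permutations of `max_i |s_i - k(n+1)/2|`
(computed as `max_i |2 s_i - k(n+1)| / 2`). -/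
noncomputable def disc (n k : ℕ) : ℚ :=
  Finset.inf' (Finset.univ : Finset (Equiv.Perm (Fin n))) ⟨1, Finset.mem_univ 1⟩
    (fun π => ((Finset.sup (Finset.range n)
        (fun i => ((2 * (ksum n k π i : ℤ)) - (k : ℤ) * ((n : ℤ) + 1)).natAbs) : ℕ) : ℚ) / 2)

def gval (n : ℕ) (hn : 0 < n) (π : Equiv.Perm (Fin n)) (m : ℕ) : ℕ :=
  (π ⟨m % n, Nat.mod_lt _ hn⟩ : ℕ) + 1

lemma gval_add_n (n : ℕ) (hn : 0 < n) (π : Equiv.Perm (Fin n)) (m : ℕ) :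
    gval n hn π (m + n) = gval n hn π m := by
  simp [gval, Nat.add_mod_right]

lemma ksum_eq_gval (n k : ℕ) (hn : 0 < n) (π : Equiv.Perm (Fin n)) (i : ℕ) :
    ksum n k π i = ∑ j ∈ Finset.range k, gval n hn π (i + j) := by
  unfold ksum gval
  exact Finset.sum_congr rfl fun j _ => dif_pos _

lemma sum_gval_shift (n : ℕ) (hn : 0 < n) (π : Equiv.Perm (Fin n)) (j : ℕ) :
    ∑ i ∈ Finset.range n, gval n hn π (i + j) = ∑ i ∈ Finset.range n, gval n hn π i := by
  induction j with
  | zero => simp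
  | succ j ih =>
    have h1 := Finset.sum_range_succ' (fun i => gval n hn π (i + j)) n
    have h2 := Finset.sum_range_succ (fun i => gval n hn π (i + j)) n
    have h3 : gval n hn π (n + j) = gval n hn π (0 + j) := by
      rw [Nat.add_comm n j, gval_add_n]; simp
    have h4 : ∑ i ∈ Finset.range n, gval n hn π (i + (j+1))
        = ∑ i ∈ Finset.range n, gval n hn π (i + 1 + j) :=
      Finset.sum_congr rfl fun i _ => by rw [show i + (j+1) = i + 1 + j by omega]
    omega

lemma sum_gval (n : ℕ) (hn : 0 < n) (π : Equiv.Perm (Fin n)) :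
    2 * ∑ i ∈ Finset.range n, gval n hn π i = n * (n + 1) := by
  have h0 : ∑ i ∈ Finset.range n, gval n hn π i = ∑ x : Fin n, ((π x : ℕ) + 1) := by
    rw [← Fin.sum_univ_eq_sum_range (fun i => gval n hn π i) n]
    refine Finset.sum_congr rfl fun x _ => ?_
    simp [gval, Nat.mod_eq_of_lt x.isLt]
  have h1 : ∑ x : Fin n, ((π x : ℕ) + 1) = ∑ x : Fin n, ((x : ℕ) + 1) :=
    Equiv.sum_comp π (fun x : Fin n => (x : ℕ) + 1)
  have h2 : ∑ x : Fin n, ((x : ℕ) + 1) = ∑ i ∈ Finset.range n, (i + 1) :=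
    Fin.sum_univ_eq_sum_range (fun i => i + 1) n
  have h3 := Finset.sum_range_succ' (fun i => i) n
  have h4 := Finset.sum_range_id_mul_two (n + 1)
  have h5 : ∑ i ∈ Finset.range n, (i + 1) = ∑ i ∈ Finset.range (n+1), i := by omega
  have h6 : (n + 1) * (n + 1 - 1) = n * (n + 1) := by rw [Nat.add_sub_cancel, Nat.mul_comm]
  rw [h0, h1, h2, h5]
  omega

lemma sum_ksum (n k : ℕ) (hn : 0 < n) (π : Equiv.Perm (Fin n)) :
    2 * ∑ i ∈ Finset.range n, ksum n k π i = k * (n * (n + 1)) := by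
  have : ∑ i ∈ Finset.range n, ksum n k π i
      = ∑ j ∈ Finset.range k, ∑ i ∈ Finset.range n, gval n hn π (i + j) := by
    rw [← Finset.sum_comm]
    exact Finset.sum_congr rfl fun i _ => ksum_eq_gval n k hn π i
  rw [this]
  have : ∀ j ∈ Finset.range k, ∑ i ∈ Finset.range n, gval n hn π (i + j)
      = ∑ i ∈ Finset.range n, gval n hn π i := fun j _ => sum_gval_shift n hn π j
  rw [Finset.sum_congr rfl this, Finset.sum_const, Finset.card_range, smul_eq_mul,
    Nat.mul_left_comm, sum_gval n hn π]

lemma ksum_mod (n k : ℕ) (hn : 0 < n) (π : Equiv.Perm (Fin n)) (i : ℕ) :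
    ksum n k π i = ksum n k π (i % n) := by
  rw [ksum_eq_gval n k hn π, ksum_eq_gval n k hn π]
  refine Finset.sum_congr rfl fun j _ => ?_
  exact congrArg (fun x : Fin n => (π x : ℕ) + 1) (Fin.ext (Nat.mod_add_mod i n j).symm)

lemma key (n k : ℕ) (hk : 1 ≤ k) (hkn : k < n) (π : Equiv.Perm (Fin n)) :
    k * (n + 1) < 2 * maxksum n k π := by
  have hn : 0 < n := lt_of_le_of_lt (Nat.zero_le k) hkn
  set M := maxksum n k π with hM
  have hle : ∀ i ∈ Finset.range n, ksum n k π i ≤ M := fun i hi => Finset.le_sup hi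
  have hsum := sum_ksum n k hn π
  rcases lt_or_ge (k * (n + 1)) (2 * M) with h | h
  · exact h
  exfalso
  have hall : ∀ i ∈ Finset.range n, ksum n k π i = M := by
    by_contra hc
    push_neg at hc
    obtain ⟨i0, hi0, hne⟩ := hc
    have hlt : ksum n k π i0 < M := lt_of_le_of_ne (hle i0 hi0) hne
    have hslt : ∑ i ∈ Finset.range n, ksum n k π i < ∑ _i ∈ Finset.range n, M :=
      Finset.sum_lt_sum hle ⟨i0, hi0, hlt⟩
    rw [Finset.sum_const, Finset.card_range, smul_eq_mul] at hslt
    have h2 : n * (2 * M) ≤ n * (k * (n + 1)) := Nat.mul_le_mul_left n h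
    have h3 : n * (k * (n + 1)) = k * (n * (n + 1)) := by ring
    have e1 : n * (2 * M) = 2 * (n * M) := by ring
    omega
  have hallN : ∀ i, ksum n k π i = M := by
    intro i
    rw [ksum_mod n k hn π i]
    exact hall (i % n) (Finset.mem_range.mpr (Nat.mod_lt _ hn))
  have hstep : ∀ i, gval n hn π (i + k) = gval n hn π i := by
    intro i
    have h1 := Finset.sum_range_succ' (fun j => gval n hn π (i + j)) k
    have h2 := Finset.sum_range_succ (fun j => gval n hn π (i + j)) k
    simp only [Nat.add_zero] at h1
    have h3 : ∑ j ∈ Finset.range k, gval n hn π (i + (j + 1)) = ksum n k π (i + 1) := by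
      rw [ksum_eq_gval n k hn π]
      exact Finset.sum_congr rfl fun j _ => by rw [show i + (j + 1) = i + 1 + j by omega]
    have h4 : ∑ j ∈ Finset.range k, gval n hn π (i + j) = ksum n k π i :=
      (ksum_eq_gval n k hn π i).symm
    have e1 := hallN i
    have e2 := hallN (i + 1)
    omega
  have hiter : ∀ m i, gval n hn π (i + m * k) = gval n hn π i := by
    intro m
    induction m with
    | zero => simp
    | succ m ih =>
      intro i
      rw [show i + (m + 1) * k = (i + m * k) + k by ring, hstep, ih]
  -- Bezout: find m with (m * k) % n = gcd k n
  set d := Nat.gcd k n with hd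
  have hd1 : 0 < d := Nat.gcd_pos_of_pos_left n hk
  have hd2 : d < n := lt_of_le_of_lt (Nat.gcd_le_left n hk) hkn
  set a := Nat.gcdA k n with ha
  have hb : (d : ℤ) = k * a + n * Nat.gcdB k n := Nat.gcd_eq_gcd_ab k n
  have hnz : (n : ℤ) ≠ 0 := by exact_mod_cast hn.ne'
  set m : ℕ := (a % n).toNat with hm
  have hm1 : (m : ℤ) = a % (n : ℤ) := Int.toNat_of_nonneg (Int.emod_nonneg a hnz)
  have hmod : ((m * k : ℕ) : ℤ) % n = ((d : ℕ) : ℤ) % n := by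
    push_cast
    rw [Int.mul_emod, hm1, Int.emod_emod_of_dvd a dvd_rfl, ← Int.mul_emod, mul_comm,
      hb, Int.add_mul_emod_self_left]
  have hmn : (m * k) % n = d := by
    have h1 : ((m * k % n : ℕ) : ℤ) = ((d % n : ℕ) : ℤ) := by
      rw [Int.natCast_mod, Int.natCast_mod]; exact hmod
    have h2 : m * k % n = d % n := Nat.cast_injective h1
    rw [Nat.mod_eq_of_lt hd2] at h2
    exact h2
  have hg := hiter m 0
  unfold gval at hg
  have h9 := π.injective (Fin.val_injective (Nat.add_right_cancel hg))
  have hvv := congrArg Fin.val h9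
  simp only [Nat.zero_add, Nat.zero_mod] at hvv
  omega

theorem stmt3 (n k : ℕ) (hk : 1 ≤ k) (hkn : k < n) :
    0 < msum n k ∧
    ((Odd k ∧ Even n) →
      ((∃ t : ℕ, Odd t ∧ 2 * msum n k = (t : ℚ)) ∧ (1 : ℚ) / 2 ≤ msum n k)) ∧
    (¬ (Odd k ∧ Even n) →
      ((∃ t : ℕ, 0 < t ∧ msum n k = (t : ℚ)) ∧ (1 : ℚ) ≤ msum n k)) := by
  have hn : 0 < n := lt_of_le_of_lt (Nat.zero_le k) hkn
  obtain ⟨π₀, -, hmin⟩ := Finset.exists_mem_eq_inf'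
      (⟨1, Finset.mem_univ 1⟩ : (Finset.univ : Finset (Equiv.Perm (Fin n))).Nonempty)
      (fun π => (maxksum n k π : ℚ) - (k : ℚ) * ((n : ℚ) + 1) / 2)
  have hmsum : msum n k = (maxksum n k π₀ : ℚ) - (k : ℚ) * ((n : ℚ) + 1) / 2 := hmin
  set M := maxksum n k π₀ with hM
  have hkey : k * (n + 1) < 2 * M := key n k hk hkn π₀
  have hkeyQ : (k : ℚ) * ((n : ℚ) + 1) < 2 * (M : ℚ) := by exact_mod_cast hkey
  have hpos : 0 < msum n k := by rw [hmsum]; linarith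
  refine ⟨hpos, ?_, ?_⟩
  · rintro ⟨hok, hen⟩
    have hodd : Odd (k * (n + 1)) := hok.mul hen.add_one
    have h1 : k * (n + 1) + 1 ≤ 2 * M := hkey
    have h1Q : (k : ℚ) * ((n : ℚ) + 1) + 1 ≤ 2 * (M : ℚ) := by
      have : ((k * (n + 1) + 1 : ℕ) : ℚ) ≤ ((2 * M : ℕ) : ℚ) := by exact_mod_cast h1
      push_cast at this
      linarith
    refine ⟨⟨2 * M - k * (n + 1), ?_, ?_⟩, ?_⟩
    · rw [Nat.odd_iff] at hodd ⊢
      omega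
    · rw [hmsum]
      have hcast : ((2 * M - k * (n + 1) : ℕ) : ℚ) = 2 * (M : ℚ) - (k : ℚ) * ((n : ℚ) + 1) := by
        rw [Nat.cast_sub hkey.le]
        push_cast
        ring
      rw [hcast]
      ring
    · rw [hmsum]; linarith
  · intro hne
    have heven : Even (k * (n + 1)) := by
      rcases Nat.even_or_odd k with hk2 | hk2
      · exact hk2.mul_right _
      · rcases Nat.even_or_odd n with h | h
        · exact absurd ⟨hk2, h⟩ hne
        · exact h.add_one.mul_left _
    obtain ⟨c, hc⟩ := heven
    have hcM : c + 1 ≤ M := by omega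
    have hcQ : (k : ℚ) * ((n : ℚ) + 1) = 2 * (c : ℚ) := by
      have : ((k * (n + 1) : ℕ) : ℚ) = ((2 * c : ℕ) : ℚ) := by exact_mod_cast (by omega : k * (n + 1) = 2 * c)
      push_cast at this
      linarith
    have hcMQ : (c : ℚ) + 1 ≤ (M : ℚ) := by exact_mod_cast hcM
    refine ⟨⟨M - c, by omega, ?_⟩, ?_⟩
    · rw [hmsum, hcQ]
      rw [Nat.cast_sub (by omega : c ≤ M)]
      ring
    · rw [hmsum, hcQ]
      linarith
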